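/- Let A ∈ R^{m×n} with m ≤ n have full row rank, and let P = (A Aᵀ)^{-1/2} A. Then P is the closest matrix with orthonormal rows to A in Frobenius norm: for every Q ∈ R^{m×n} with Q Qᵀ = I_m, ‖A − P‖_F ≤ ‖A − Q‖_F. -/

import Mathlib

open Matrix

open Classical in
/-- The unique positive semidefinite square root of a positive semidefinite matrix
(junk value `0` if `A` is not positive semidefinite). -/
noncomputable def matSqrt {m : ℕ} (A : Matrix (Fin m) (Fin m) ℝ) : Matrix (Fin m) (Fin m) ℝ :=
  if h : A.PosSemidef then
    h.1.eigenvectorUnitary.1 * diagonal (fun i => Real.sqrt (h.1.eigenvalues i)) *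
      (star h.1.eigenvectorUnitary : Matrix (Fin m) (Fin m) ℝ) else 0

/-- The GradWhitening operator `A ↦ (A Aᵀ)^{-1/2} A`. -/
noncomputable def whiten {m n : ℕ} (A : Matrix (Fin m) (Fin n) ℝ) : Matrix (Fin m) (Fin n) ℝ :=
  (matSqrt (A * Aᵀ))⁻¹ * A

/-- The Schatten 1-norm (sum of singular values): `‖A‖₁ = Tr((A Aᵀ)^{1/2})`. -/
noncomputable def schattenOne {m n : ℕ} (A : Matrix (Fin m) (Fin n) ℝ) : ℝ :=
  (matSqrt (A * Aᵀ)).trace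

/-- The quadratic loss `L(W) = (1/2) * Tr(Wᵀ H W)`. -/
noncomputable def loss {m n : ℕ} (H : Matrix (Fin m) (Fin m) ℝ)
    (W : Matrix (Fin m) (Fin n) ℝ) : ℝ :=
  (1 / 2) * (Wᵀ * H * W).trace

/-- The Frobenius norm of a real matrix. -/
noncomputable def frobNorm {m n : ℕ} (A : Matrix (Fin m) (Fin n) ℝ) : ℝ :=
  Real.sqrt (∑ i, ∑ j, (A i j) ^ 2)

/-! With `S = (A Aᵀ)^{1/2}` and `P = S⁻¹ A`, the rows of `P` are orthonormal and `A Pᵀ = S`.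
For `Q` with orthonormal rows, `‖A - Q‖_F² = ‖A‖_F² - 2 tr(A Qᵀ) + m`, so it suffices to show
`tr(A Qᵀ) ≤ tr S`. Factor `S = Bᵀ B`; then `tr(A Qᵀ) = tr(S P Qᵀ) = ⟨B P, B Q⟩_F`, which is at most
`(‖B P‖_F² + ‖B Q‖_F²) / 2 = tr S`. -/

namespace Matrix

section

variable {ι κ K : Type*} [Fintype ι] [Fintype κ]

lemma isUnit_of_rank_eq_card [DecidableEq ι] [Field K] {B : Matrix ι ι K}
    (h : B.rank = Fintype.card ι) : IsUnit B := by
  rw [← mulVec_surjective_iff_isUnit, ← coe_mulVecLin, ← LinearMap.range_eq_top]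
  exact Submodule.eq_top_of_finrank_eq (by rw [← rank, h, Module.finrank_fintype_fun_eq_card])

lemma isUnit_mul_transpose_of_rank_eq_card [DecidableEq ι] [Field K] [LinearOrder K]
    [IsStrictOrderedRing K] {A : Matrix ι κ K} (h : A.rank = Fintype.card ι) :
    IsUnit (A * Aᵀ) :=
  isUnit_of_rank_eq_card (by rw [rank_self_mul_transpose, h])

lemma trace_sub_mul_transpose_sub [CommRing K] (X Y : Matrix ι κ K) :
    ((X - Y) * (X - Y)ᵀ).trace = (X * Xᵀ).trace - 2 * (X * Yᵀ).trace + (Y * Yᵀ).trace := by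
  have hYX : (Y * Xᵀ).trace = (X * Yᵀ).trace := by
    rw [← trace_transpose, transpose_mul, transpose_transpose]
  rw [transpose_sub, Matrix.sub_mul, Matrix.mul_sub, Matrix.mul_sub, trace_sub, trace_sub,
    trace_sub, hYX]
  ring

lemma two_mul_trace_mul_transpose_le (X Y : Matrix ι κ ℝ) :
    2 * (X * Yᵀ).trace ≤ (X * Xᵀ).trace + (Y * Yᵀ).trace := by
  have h := (posSemidef_self_mul_conjTranspose (X - Y)).trace_nonneg
  rw [conjTranspose_eq_transpose_of_trivial, trace_sub_mul_transpose_sub] at h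
  linarith

open scoped MatrixOrder in
lemma PosSemidef.trace_mul_mul_transpose_le_trace [DecidableEq ι] {S : Matrix ι ι ℝ}
    (hS : S.PosSemidef) {P Q : Matrix ι κ ℝ} (hP : P * Pᵀ = 1) (hQ : Q * Qᵀ = 1) :
    (S * P * Qᵀ).trace ≤ S.trace := by
  obtain ⟨B, rfl⟩ := CStarAlgebra.nonneg_iff_eq_star_mul_self.mp hS.nonneg
  rw [star_eq_conjTranspose, conjTranspose_eq_transpose_of_trivial]
  have hBR (R : Matrix ι κ ℝ) (hR : R * Rᵀ = 1) :
      (B * R * (B * R)ᵀ).trace = (Bᵀ * B).trace := by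
    rw [transpose_mul, Matrix.mul_assoc, ← Matrix.mul_assoc R, hR, Matrix.one_mul,
      trace_mul_comm]
  have hBPQ : (B * P * (B * Q)ᵀ).trace = (Bᵀ * B * P * Qᵀ).trace := by
    rw [transpose_mul, ← Matrix.mul_assoc, trace_mul_comm, Matrix.mul_assoc Bᵀ,
      Matrix.mul_assoc Bᵀ, Matrix.mul_assoc]
  have := two_mul_trace_mul_transpose_le (B * P) (B * Q)
  rw [hBR P hP, hBR Q hQ, hBPQ] at this
  linarith

lemma mul_transpose_nonsing_inv_mul [DecidableEq ι] [CommRing K] {A : Matrix ι κ K}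
    {S : Matrix ι ι K} (hS : S.IsSymm) (hSdet : IsUnit S.det) (hSS : S * S = A * Aᵀ) :
    A * (S⁻¹ * A)ᵀ = S := by
  rw [transpose_mul, transpose_nonsing_inv, hS.eq, ← Matrix.mul_assoc, ← hSS,
    mul_nonsing_inv_cancel_right _ _ hSdet]

lemma nonsing_inv_mul_mul_transpose_nonsing_inv_mul [DecidableEq ι] [CommRing K]
    {A : Matrix ι κ K} {S : Matrix ι ι K} (hS : S.IsSymm) (hSdet : IsUnit S.det)
    (hSS : S * S = A * Aᵀ) : S⁻¹ * A * (S⁻¹ * A)ᵀ = 1 := by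
  rw [Matrix.mul_assoc, mul_transpose_nonsing_inv_mul hS hSdet hSS, nonsing_inv_mul _ hSdet]

end

end Matrix

section

open scoped MatrixOrder

variable {m n : ℕ}

lemma matSqrt_eq_cfcSqrt {A : Matrix (Fin m) (Fin m) ℝ} (hA : A.PosSemidef) :
    matSqrt A = CFC.sqrt A := by
  rw [CFC.sqrt_eq_cfc, cfc_nnreal_eq_real _ A, hA.1.cfc_eq, matSqrt, dif_pos hA]
  simp [IsHermitian.cfc, Unitary.conjStarAlgAut_apply, Function.comp_def,
    max_eq_left (hA.eigenvalues_nonneg _)]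

lemma Matrix.PosSemidef.matSqrt {A : Matrix (Fin m) (Fin m) ℝ} (hA : A.PosSemidef) :
    (matSqrt A).PosSemidef := by
  rw [matSqrt_eq_cfcSqrt hA]
  exact (CFC.sqrt_nonneg A).posSemidef

lemma matSqrt_mul_self {A : Matrix (Fin m) (Fin m) ℝ} (hA : A.PosSemidef) :
    matSqrt A * matSqrt A = A := by
  rw [matSqrt_eq_cfcSqrt hA]
  exact CFC.sqrt_mul_sqrt_self A hA.nonneg

lemma frobNorm_eq_sqrt_trace (X : Matrix (Fin m) (Fin n) ℝ) : frobNorm X = √(X * Xᵀ).trace := by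
  simp [frobNorm, trace, mul_apply, sq]

lemma frobNorm_sub_le_of_trace_le {A P Q : Matrix (Fin m) (Fin n) ℝ} (hP : P * Pᵀ = 1)
    (hQ : Q * Qᵀ = 1) (h : (A * Qᵀ).trace ≤ (A * Pᵀ).trace) :
    frobNorm (A - P) ≤ frobNorm (A - Q) := by
  simp only [frobNorm_eq_sqrt_trace, trace_sub_mul_transpose_sub, hP, hQ]
  gcongr

end

theorem whiten_closest_orthonormal_general {m n : ℕ}
    (A : Matrix (Fin m) (Fin n) ℝ) (hrank : A.rank = m) :
    ∀ Q : Matrix (Fin m) (Fin n) ℝ, Q * Qᵀ = 1 →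
      frobNorm (A - whiten A) ≤ frobNorm (A - Q) := by
  intro Q hQ
  have hAA : (A * Aᵀ).PosSemidef := by simpa using posSemidef_self_mul_conjTranspose A
  set S := matSqrt (A * Aᵀ)
  have hS : S.PosSemidef := hAA.matSqrt
  have hSsymm : S.IsSymm := isHermitian_iff_isSymm.mp hS.isHermitian
  have hSS : S * S = A * Aᵀ := matSqrt_mul_self hAA
  have hSdet : IsUnit S.det := (isUnit_iff_isUnit_det S).mp <| isUnit_of_mul_isUnit_left <|
    hSS ▸ isUnit_mul_transpose_of_rank_eq_card (by simpa using hrank)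
  have hP : whiten A * (whiten A)ᵀ = 1 :=
    nonsing_inv_mul_mul_transpose_nonsing_inv_mul hSsymm hSdet hSS
  have hSP : S * whiten A = A := mul_nonsing_inv_cancel_left _ _ hSdet
  have hAP : A * (whiten A)ᵀ = S := mul_transpose_nonsing_inv_mul hSsymm hSdet hSS
  refine frobNorm_sub_le_of_trace_le hP hQ ?_
  calc (A * Qᵀ).trace = (S * whiten A * Qᵀ).trace := by rw [hSP]
    _ ≤ S.trace := hS.trace_mul_mul_transpose_le_trace hP hQ
    _ = (A * (whiten A)ᵀ).trace := by rw [hAP]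

/-- The whitening `P = (A Aᵀ)^{-1/2} A` of a full-row-rank matrix `A` is the closest matrix
with orthonormal rows to `A` in Frobenius norm. -/
theorem whiten_closest_orthonormal {m n : ℕ} (hmn : m ≤ n)
    (A : Matrix (Fin m) (Fin n) ℝ) (hrank : A.rank = m) :
    ∀ Q : Matrix (Fin m) (Fin n) ℝ, Q * Qᵀ = 1 →
      frobNorm (A - whiten A) ≤ frobNorm (A - Q) :=
  whiten_closest_orthonormal_general A hrank
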